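/- Let p be a prime and let f be a nonzero polynomial with complex coefficients of degree at most p−1. If f has m distinct roots which are p-th roots of unity, then the number of nonzero coefficients of f is strictly greater than m. -/

import Mathlib

/-!
Let `θ` be the root of `cyclotomic p ℤ` in `ℤ[θ]`, which embeds into `ℂ` with `θ ↦ ζ` and maps onto
`𝔽_p = ℤ[θ]/(θ - 1)` with `θ ↦ 1`. If `f` had `k` nonzero coefficients and vanished at `k` distinct
`p`-th roots of unity `ζ^bᵢ`, the corresponding generalized Vandermonde matrix would be singular,
so some nonzero `g ∈ ℤ[θ][X]` with the same support vanishes at all `θ^bᵢ`. After dividing out the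
largest power of `θ - 1`, its reduction is a nonzero polynomial over `𝔽_p` of degree `< p` with at
most `k` terms, divisible by `(X - 1)^k`. That is impossible: `g ↦ X g' - (deg g) g` removes the
leading term, keeps every other term (the exponents differ by less than `p`), and lowers the
multiplicity of the root `1` by one.
-/

open Polynomial Finset

namespace Polynomial

section CharP

variable {R : Type*} [CommRing R]

theorem coeff_X_mul_derivative_sub_C_mul (g : R[X]) (a n : ℕ) :
    (X * derivative g - C (a : R) * g).coeff n = ((n : R) - a) * g.coeff n := by
  rcases n with _ | n
  · simp [mul_coeff_zero]
  · simp only [coeff_sub, coeff_X_mul, coeff_derivative, coeff_C_mul]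
    push_cast; ring

theorem one_lt_card_support_of_isRoot [NoZeroDivisors R] {g : R[X]} {x : R} (hg : g ≠ 0)
    (hx : x ≠ 0) (hroot : g.IsRoot x) : 1 < #g.support := by
  refine lt_of_le_of_ne (card_pos.mpr (support_nonempty.mpr hg)) fun h => ?_
  obtain ⟨k, c, hc, rfl⟩ := card_support_eq_one.mp h.symm
  exact pow_ne_zero k hx (by simpa [hc] using hroot)

variable [IsDomain R] {p : ℕ} [CharP R p]

theorem support_X_mul_derivative_sub_C_natDegree_mul {g : R[X]} (hdeg : g.natDegree < p) :
    (X * derivative g - C (g.natDegree : R) * g).support = g.support.erase g.natDegree := by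
  ext n
  simp only [mem_support_iff, mem_erase, coeff_X_mul_derivative_sub_C_mul, ne_eq, mul_eq_zero,
    not_or, sub_eq_zero, and_comm]
  refine and_congr_right fun hn => ⟨fun h h' => h (h' ▸ rfl), fun h h' => h ?_⟩
  have := le_natDegree_of_ne_zero hn
  exact Nat.ModEq.eq_of_lt_of_lt ((CharP.natCast_eq_natCast R p).mp h') (by omega) hdeg

theorem lt_card_support_of_X_sub_one_pow_dvd {m : ℕ} {g : R[X]} (hg : g ≠ 0)
    (hdeg : g.natDegree < p) (hdvd : (X - 1) ^ m ∣ g) : m < #g.support := by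
  induction m generalizing g with
  | zero => exact card_pos.mpr (support_nonempty.mpr hg)
  | succ m ih =>
    set g₁ := X * derivative g - C (g.natDegree : R) * g
    have hsupp : g₁.support = g.support.erase g.natDegree :=
      support_X_mul_derivative_sub_C_natDegree_mul hdeg
    have hroot : g.IsRoot 1 := by
      simpa using dvd_iff_isRoot.mp ((dvd_pow_self _ m.succ_ne_zero).trans hdvd)
    have htwo := one_lt_card_support_of_isRoot hg one_ne_zero hroot
    have hcard : #g₁.support = #g.support - 1 := by
      rw [hsupp, card_erase_of_mem (natDegree_mem_support_of_nonzero hg)]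
    have hg₁ : g₁ ≠ 0 := fun h => by simp [h] at hcard; omega
    have hdeg₁ : g₁.natDegree < p := by
      have := natDegree_mem_support_of_nonzero hg₁
      rw [hsupp] at this
      exact (le_natDegree_of_mem_supp _ (mem_of_mem_erase this)).trans_lt hdeg
    have hdvd₁ : (X - 1) ^ m ∣ g₁ :=
      dvd_sub ((pow_sub_one_dvd_derivative_of_pow_dvd hdvd).mul_left X)
        (((pow_dvd_pow _ m.le_succ).trans hdvd).mul_left _)
    have := ih hg₁ hdeg₁ hdvd₁
    omega

end CharP

section Descent

theorem eval_eq_sum_of_support_subset {R : Type*} [CommSemiring R] {A : Finset ℕ} {f : R[X]}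
    (hfA : f.support ⊆ A) (x : R) : f.eval x = ∑ j : A, f.coeff j * x ^ (j : ℕ) := by
  rw [eval_eq_sum, sum_eq_of_subset (fun e a => a * x ^ e) (fun _ => zero_mul _) hfA,
    ← sum_coe_sort]

variable {R K F : Type*} [CommRing R] [IsDomain R]

theorem prod_X_sub_C_dvd_of_isRoot {ι : Type*} [Fintype ι] {r : ι → R}
    (hr : Function.Injective r) {g : R[X]} (hg : ∀ i, g.IsRoot (r i)) :
    ∏ i, (X - C (r i)) ∣ g := by
  rcases eq_or_ne g 0 with rfl | hg0
  · exact dvd_zero _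
  rw [prod_eq_multiset_prod, show univ.val.map (fun i => X - C (r i)) =
      (univ.val.map r).map (fun a => X - C a) by rw [Multiset.map_map]; rfl,
    Multiset.prod_X_sub_C_dvd_iff_le_roots hg0,
    Multiset.le_iff_subset (univ.nodup.map hr)]
  intro x hx
  obtain ⟨i, -, rfl⟩ := Multiset.mem_map.mp hx
  exact (mem_roots hg0).mpr (hg i)

theorem exists_ne_zero_support_subset_isRoot_of_injective [CommRing K] [IsDomain K]
    {ψ : R →+* K} (hψ : Function.Injective ψ) {A : Finset ℕ} (r : A → R) {f : K[X]}
    (hf : f ≠ 0) (hfA : f.support ⊆ A) (hfr : ∀ i, f.IsRoot (ψ (r i))) :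
    ∃ g : R[X], g ≠ 0 ∧ g.support ⊆ A ∧ ∀ i, g.IsRoot (r i) := by
  classical
  let N : Matrix A A R := Matrix.of fun i j => r i ^ (j : ℕ)
  have hdet : N.det = 0 := by
    refine hψ ?_
    rw [map_zero, RingHom.map_det]
    refine Matrix.exists_mulVec_eq_zero_iff.mp ⟨fun j => f.coeff j, fun h => ?_, ?_⟩
    · obtain ⟨n, hn⟩ := support_nonempty.mpr hf
      exact mem_support_iff.mp hn (congrFun h ⟨n, hfA hn⟩)
    · ext i
      simpa [Matrix.mulVec, dotProduct, N, eval_eq_sum_of_support_subset hfA, mul_comm,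
        RingHom.mapMatrix_apply, Matrix.map_apply]
        using hfr i
  obtain ⟨v, hv, hNv⟩ := Matrix.exists_mulVec_eq_zero_iff.mpr hdet
  set g := ∑ j : A, monomial j (v j)
  have hcoeff : ∀ j : A, g.coeff j = v j := fun j => by simp [g, finsetSum_coeff, coeff_monomial]
  refine ⟨g, fun h => hv (by ext j; simpa [h] using (hcoeff j).symm), fun n hn => ?_,
    fun i => ?_⟩
  · by_contra hnA
    refine mem_support_iff.mp hn ?_
    simp only [g, finsetSum_coeff, coeff_monomial]
    exact sum_eq_zero fun j _ => if_neg fun (h : (j : ℕ) = n) => hnA (h ▸ j.2)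
  · simpa [g, Matrix.mulVec, dotProduct, N, eval_finsetSum, mul_comm] using congrFun hNv i

theorem exists_eq_C_pow_mul_map_ne_zero [WfDvdMonoid R] [CommRing F] (φ : R →+* F) {π : R}
    (hπ : ¬IsUnit π) (hker : RingHom.ker φ ≤ Ideal.span {π}) {g : R[X]}
    (hg : g ≠ 0) : ∃ n h, g = C π ^ n * h ∧ h.map φ ≠ 0 := by
  obtain ⟨n, h, hndvd, rfl⟩ :=
    WfDvdMonoid.max_power_factor' hg (mt isUnit_C.mp hπ)
  refine ⟨n, h, rfl, fun h0 => hndvd ((C_dvd_iff_dvd_coeff _ _).mpr fun i => ?_)⟩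
  refine Ideal.mem_span_singleton.mp (hker ?_)
  simpa using congrArg (coeff · i) h0

theorem exists_map_ne_zero_support_subset_prod_dvd [WfDvdMonoid R] [CommRing K] [IsDomain K]
    [CommRing F] {ψ : R →+* K} (hψ : Function.Injective ψ) (φ : R →+* F) {π : R}
    (hπ : ¬IsUnit π) (hker : RingHom.ker φ ≤ Ideal.span {π}) {A : Finset ℕ} {r : A → R}
    (hr : Function.Injective r) {f : K[X]} (hf : f ≠ 0) (hfA : f.support ⊆ A)
    (hfr : ∀ i, f.IsRoot (ψ (r i))) :
    ∃ g : F[X], g ≠ 0 ∧ g.support ⊆ A ∧ ∏ i, (X - C (φ (r i))) ∣ g := by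
  obtain ⟨G, hG0, hGA, hGr⟩ := exists_ne_zero_support_subset_isRoot_of_injective hψ r hf hfA hfr
  obtain ⟨n, H, rfl, hH⟩ := exists_eq_C_pow_mul_map_ne_zero φ hπ hker hG0
  have hπn : π ^ n ≠ 0 := by simpa using left_ne_zero_of_mul hG0
  have hHA : H.support ⊆ A := fun i hi => hGA <| by
    rw [mem_support_iff, ← C_pow, coeff_C_mul]
    exact mul_ne_zero hπn (mem_support_iff.mp hi)
  have hHr : ∀ i, H.IsRoot (r i) := fun i => by
    simpa [hπn] using hGr i
  refine ⟨H.map φ, hH, (support_map_subset φ H).trans hHA, ?_⟩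
  simpa [Polynomial.map_prod] using Polynomial.map_dvd φ (prod_X_sub_C_dvd_of_isRoot hr hHr)

end Descent

end Polynomial

theorem AdjoinRoot.root_sub_of_dvd_mk_sub_of_eval {R : Type*} [CommRing R] (f g : R[X])
    (a : R) :
    root f - of f a ∣ mk f g - of f (g.eval a) := by
  simpa [mk_X, mk_C] using map_dvd (mk f) (X_sub_C_dvd_sub_C_eval (p := g) (a := a))

section Cyclotomic

open AdjoinRoot

variable {n : ℕ} [NeZero n]

instance : IsDomain (AdjoinRoot (cyclotomic n ℤ)) :=
  isDomain_of_prime (cyclotomic.irreducible (NeZero.pos n)).prime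

noncomputable def cyclotomicEmbedding {K : Type*} [Field K] [CharZero K] {ζ : K}
    (hζ : IsPrimitiveRoot ζ n) : AdjoinRoot (cyclotomic n ℤ) →+* K :=
  lift (Int.castRingHom K) ζ (by
    rw [eval₂_eq_eval_map, map_cyclotomic]
    exact hζ.isRoot_cyclotomic (NeZero.pos n))

variable {K : Type*} [Field K] [CharZero K] {ζ : K} (hζ : IsPrimitiveRoot ζ n)

@[simp]
theorem cyclotomicEmbedding_root : cyclotomicEmbedding hζ (root (cyclotomic n ℤ)) = ζ :=
  lift_root _

theorem cyclotomicEmbedding_injective : Function.Injective (cyclotomicEmbedding hζ) := by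
  refine (injective_iff_map_eq_zero _).mpr fun x hx => ?_
  obtain ⟨g, rfl⟩ := mk_surjective x
  rw [cyclotomicEmbedding, lift_mk] at hx
  rw [mk_eq_zero, cyclotomic_eq_minpoly hζ (NeZero.pos n)]
  exact minpoly.isIntegrallyClosed_dvd (hζ.isIntegral (NeZero.pos n))
    (by rwa [aeval_def, algebraMap_int_eq])

end Cyclotomic

section Reduction

open AdjoinRoot

variable (p : ℕ) [Fact p.Prime]

noncomputable def cyclotomicReduction : AdjoinRoot (cyclotomic p ℤ) →+* ZMod p :=
  lift (Int.castRingHom (ZMod p)) 1 (by simp [eval₂_at_one, eval_one_cyclotomic_prime])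

@[simp]
theorem cyclotomicReduction_root : cyclotomicReduction p (root (cyclotomic p ℤ)) = 1 :=
  lift_root _

theorem ker_cyclotomicReduction_le :
    RingHom.ker (cyclotomicReduction p) ≤ Ideal.span {root (cyclotomic p ℤ) - 1} := by
  intro x hx
  obtain ⟨g, rfl⟩ := mk_surjective x
  rw [RingHom.mem_ker, cyclotomicReduction, lift_mk, eval₂_at_one, eq_intCast,
    ZMod.intCast_zmod_eq_zero_iff_dvd] at hx
  obtain ⟨s, hs⟩ := hx
  have hdvd_p : root (cyclotomic p ℤ) - 1 ∣ (p : AdjoinRoot (cyclotomic p ℤ)) := by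
    simpa [eval_one_cyclotomic_prime] using
      root_sub_of_dvd_mk_sub_of_eval (cyclotomic p ℤ) (cyclotomic p ℤ) 1
  rw [Ideal.mem_span_singleton]
  have h := root_sub_of_dvd_mk_sub_of_eval (cyclotomic p ℤ) g 1
  rw [map_one, hs] at h
  simpa using h.add (hdvd_p.mul_right (s : AdjoinRoot (cyclotomic p ℤ)))

theorem not_isUnit_root_sub_one : ¬IsUnit (root (cyclotomic p ℤ) - 1) := fun h => by
  simpa using h.map (cyclotomicReduction p)

end Reduction

theorem weight_gt_card_roots_of_unity (p : ℕ) (hp : p.Prime) (f : Polynomial ℂ)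
    (hf : f ≠ 0) (hdeg : f.natDegree ≤ p - 1) (S : Finset ℂ)
    (hS : ∀ z ∈ S, z ^ p = 1 ∧ f.eval z = 0) :
    S.card < f.support.card := by
  have := Fact.mk hp
  have : NeZero p := ⟨hp.ne_zero⟩
  have hζ := Complex.isPrimitiveRoot_exp p hp.ne_zero
  set θ := AdjoinRoot.root (cyclotomic p ℤ)
  by_contra! hcard
  obtain ⟨ι⟩ : Nonempty (f.support ↪ S) := Function.Embedding.nonempty_of_card_le (by simpa)
  have hpow : ∀ i, ∃ b, cyclotomicEmbedding hζ (θ ^ b) = ι i := fun i => by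
    obtain ⟨b, -, hb⟩ := hζ.eq_pow_of_pow_eq_one (hS _ (ι i).2).1
    exact ⟨b, by simpa [θ] using hb⟩
  choose b hb using hpow
  have hr : Function.Injective fun i => θ ^ b i := fun i j h =>
    ι.injective (Subtype.ext (by simp only [← hb, h]))
  obtain ⟨g, hg0, hgA, hdvd⟩ := exists_map_ne_zero_support_subset_prod_dvd
    (cyclotomicEmbedding_injective hζ) (cyclotomicReduction p) (not_isUnit_root_sub_one p)
    (ker_cyclotomicReduction_le p) hr hf subset_rfl fun i => by
      simpa only [IsRoot.def, hb] using (hS _ (ι i).2).2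
  simp only [θ, map_pow, cyclotomicReduction_root, one_pow, map_one, prod_const, card_univ,
    Fintype.card_coe] at hdvd
  have hgdeg : g.natDegree < p :=
    (le_natDegree_of_mem_supp _ (hgA (natDegree_mem_support_of_nonzero hg0))).trans hdeg
      |>.trans_lt (Nat.sub_one_lt hp.ne_zero)
  exact (lt_card_support_of_X_sub_one_pow_dvd hg0 hgdeg hdvd).not_ge (card_le_card hgA)
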